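/- Let H be a complex Hilbert space and let T ∈ B(H) be log-hyponormal with log|T| > 0 (i.e., ⟨log|T| x, x⟩ > 0 for every nonzero x ∈ H), with polar decomposition T = U|T| where U is unitary. Then the operator S = U log|T| is semi-hyponormal. -/

import Mathlib

open ContinuousLinearMap Filter Topology

variable {H : Type*} [NormedAddCommGroup H] [InnerProductSpace ℂ H] [CompleteSpace H]

/-- The absolute value `|T| = (T^*T)^{1/2}` of a bounded operator, via the
continuous functional calculus. -/
noncomputable def opAbs (T : H →L[ℂ] H) : H →L[ℂ] H :=
  cfc Real.sqrt (adjoint T * T)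

/-- `T` is log-hyponormal: `T` is invertible and `log|T| ≥ log|T^*|`, logs via the
continuous functional calculus, and `≤` is the Loewner order. -/
def IsLogHyponormal (T : H →L[ℂ] H) : Prop :=
  IsUnit T ∧ cfc Real.log (opAbs (adjoint T)) ≤ cfc Real.log (opAbs T)

/-- `T` is semi-hyponormal: `|T| ≥ |T^*|` in the Loewner order. -/
def IsSemiHyponormal (T : H →L[ℂ] H) : Prop :=
  opAbs (adjoint T) ≤ opAbs T

noncomputable def conjHom (U : H →L[ℂ] H) (hU : U ∈ unitary (H →L[ℂ] H)) :
    (H →L[ℂ] H) →⋆ₐ[ℂ] (H →L[ℂ] H) where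
  toFun x := U * x * star U
  map_one' := by
    show U * 1 * star U = 1
    rw [mul_one, (Unitary.mem_iff.mp hU).2]
  map_mul' x y := by
    show U * (x * y) * star U = (U * x * star U) * (U * y * star U)
    simp only [mul_assoc]
    rw [← mul_assoc (star U) U, (Unitary.mem_iff.mp hU).1, one_mul]
  map_zero' := by simp
  map_add' x y := by simp [mul_add, add_mul]
  commutes' r := by
    show U * algebraMap ℂ (H →L[ℂ] H) r * star U = algebraMap ℂ (H →L[ℂ] H) r
    simp only [Algebra.algebraMap_eq_smul_one, mul_smul_comm, smul_mul_assoc, mul_one,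
      (Unitary.mem_iff.mp hU).2]
  map_star' x := by
    show U * star x * star U = star (U * x * star U)
    simp [star_mul, star_star, mul_assoc]

lemma conjHom_cont (U : H →L[ℂ] H) (hU : U ∈ unitary (H →L[ℂ] H)) :
    Continuous (conjHom U hU) := by
  show Continuous fun x => U * x * star U
  fun_prop

lemma my_sqrt_mul_self (a : H →L[ℂ] H) (ha : 0 ≤ a) : cfc Real.sqrt (a * a) = a := by
  have hsa : IsSelfAdjoint a := IsSelfAdjoint.of_nonneg ha
  have h1 : a * a = cfc (fun x : ℝ => x ^ 2) a := by
    rw [cfc_pow_id a 2, sq]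
  rw [h1, ← cfc_comp' Real.sqrt (fun x : ℝ => x ^ 2) a]
  calc cfc (fun x : ℝ => Real.sqrt (x ^ 2)) a
      = cfc (fun x : ℝ => x) a := by
        refine cfc_congr fun x hx => ?_
        rw [Real.sqrt_sq (spectrum_nonneg_of_nonneg ha hx)]
    _ = a := cfc_id ℝ a

lemma conj_selfAdjoint (U : H →L[ℂ] H) (hU : U ∈ unitary (H →L[ℂ] H)) {a : H →L[ℂ] H}
    (ha : IsSelfAdjoint a) : IsSelfAdjoint (conjHom U hU a) := by
  rw [IsSelfAdjoint, ← map_star, ha.star_eq]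

theorem stmt11 (T U : H →L[ℂ] H)
    (hT : IsLogHyponormal T)
    (hpos : ∀ v : H, v ≠ 0 → 0 < (inner ℂ (cfc Real.log (opAbs T) v) v : ℂ).re)
    (hU : U ∈ unitary (H →L[ℂ] H)) (hpolar : T = U * opAbs T) :
    IsSemiHyponormal (U * cfc Real.log (opAbs T)) := by
  set P : H →L[ℂ] H := opAbs T with hP
  set A : H →L[ℂ] H := cfc Real.log P with hA
  set φ := conjHom U hU with hφ
  have hφc : Continuous φ := conjHom_cont U hU
  have hsaA : IsSelfAdjoint A := cfc_predicate Real.log P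
  have hP0 : (0 : H →L[ℂ] H) ≤ P := by
    rw [hP, opAbs]; exact cfc_nonneg fun x _ => Real.sqrt_nonneg x
  have hsaP : IsSelfAdjoint P := .of_nonneg hP0
  have hA0 : (0 : H →L[ℂ] H) ≤ A := by
    rw [ContinuousLinearMap.nonneg_iff_isPositive]
    refine ContinuousLinearMap.isPositive_def'.mpr ⟨hsaA, fun x => ?_⟩
    rcases eq_or_ne x 0 with rfl | hx
    · simp [ContinuousLinearMap.reApplyInnerSelf]
    · exact (hpos x hx).le
  -- invertibility of P, spectrum avoids 0
  have hPunit : IsUnit P := by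
    have h1 : star U * T = P := by
      rw [hpolar, ← mul_assoc, (Unitary.mem_iff.mp hU).1, one_mul]
    have h2 : IsUnit (star U) :=
      ⟨⟨star U, U, (Unitary.mem_iff.mp hU).1, (Unitary.mem_iff.mp hU).2⟩, rfl⟩
    exact h1 ▸ h2.mul hT.1
  have hlogcont : ContinuousOn Real.log (spectrum ℝ P) :=
    Real.continuousOn_log.mono <| by
      intro x hx
      simp only [Set.mem_compl_iff, Set.mem_singleton_iff]
      rintro rfl
      exact (spectrum.zero_notMem_iff ℝ).mpr hPunit hx
  have key : ∀ (a : H →L[ℂ] H), 0 ≤ a → cfc Real.sqrt (φ a * φ a) = φ a := by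
    intro a ha
    have hsa' : IsSelfAdjoint a := .of_nonneg ha
    have hmul : IsSelfAdjoint (a * a) := by
      rw [IsSelfAdjoint, star_mul, hsa'.star_eq]
    have hφsa : IsSelfAdjoint (φ (a * a)) := conj_selfAdjoint U hU hmul
    rw [← map_mul,
      ← StarAlgHom.map_cfc φ Real.sqrt (a * a) Real.continuous_sqrt.continuousOn hφc hmul hφsa,
      my_sqrt_mul_self a ha]
  have hUU : star U * U = 1 := (Unitary.mem_iff.mp hU).1
  have e1 : ∀ a : H →L[ℂ] H, IsSelfAdjoint a → (U * a) * star (U * a) = φ a * φ a := by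
    intro a hsa'
    show (U * a) * star (U * a) = (U * a * star U) * (U * a * star U)
    rw [star_mul, hsa'.star_eq]
    simp only [mul_assoc]
    rw [← mul_assoc (star U) U, hUU, one_mul]
  have e2 : star (U * A) * (U * A) = A * A := by
    rw [star_mul, hsaA.star_eq]
    simp only [mul_assoc]
    rw [← mul_assoc (star U) U, hUU, one_mul]
  have habsT' : opAbs (ContinuousLinearMap.adjoint T) = φ P := by
    rw [opAbs, ContinuousLinearMap.adjoint_adjoint, ← ContinuousLinearMap.star_eq_adjoint,
      hpolar, e1 P hsaP, key P hP0]
  have hlog : cfc Real.log (opAbs (ContinuousLinearMap.adjoint T)) = φ A := by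
    rw [habsT', StarAlgHom.map_cfc φ Real.log P hlogcont hφc hsaP (conj_selfAdjoint U hU hsaP)]
  have hmain : φ A ≤ A := by
    have := hT.2
    rw [hlog] at this
    exact this
  show opAbs (ContinuousLinearMap.adjoint (U * A)) ≤ opAbs (U * A)
  rw [opAbs, opAbs, ContinuousLinearMap.adjoint_adjoint, ← ContinuousLinearMap.star_eq_adjoint,
    e1 A hsaA, e2, key A hA0, my_sqrt_mul_self A hA0]
  exact hmain
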